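/- Suppose (W_n)_{n≥0} is a sequence of positive reals satisfying W_n ≤ C^{1/r_n} r_n^{(2+2N)/r_n} W_{n−1}^{(r_n + m − 1)/r_n} for all n ≥ 1, where r_n = 2^n(p_0 − m −1) + m + 1 with p_0 > m+1 > 2, C ≥ 1, N ≥ 1, and W_0 ≤ C. Then sup_n W_n ≤ C' for some constant C' depending only on C, N, m, p_0 (and not on n). -/

import Mathlib

/-!
Taking logarithms turns the recursion into the affine inequality
`log W (n+1) ≤ (1 + c n) * log W n + b n` with `c n = (m - 1) / r (n+1)` and
`b n = (log C + (2 + 2N) log r (n+1)) / r (n+1)`. Since `r n` grows like `2 ^ n`, both `c` and `b`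
are summable (using `log x / x ≤ 2 x ^ (-1/2)`), so the discrete Grönwall inequality bounds
`log W n` by `(log C + ∑ b) * exp (∑ c)` uniformly in `n`.
-/

open Real Finset

theorem Real.log_div_self_le_rpow_sub_one_div {x ε : ℝ} (hx : 0 < x) (hε : 0 < ε) :
    log x / x ≤ x ^ (ε - 1) / ε := by
  rw [rpow_sub_one hx.ne', div_right_comm]
  exact div_le_div_of_nonneg_right (log_le_rpow_div hx.le hε) hx.le

theorem Real.log_le_of_le_rpow_mul_rpow_mul_rpow {w x y z α β γ : ℝ} (hw : 0 < w) (hx : 0 < x)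
    (hy : 0 < y) (hz : 0 < z) (h : w ≤ x ^ α * y ^ β * z ^ γ) :
    log w ≤ α * log x + β * log y + γ * log z := by
  have := log_le_log hw h
  rwa [log_mul (by positivity) (by positivity), log_mul (by positivity) (by positivity),
    log_rpow hx, log_rpow hy, log_rpow hz] at this

section GeometricGrowth

variable {r : ℕ → ℝ} {δ q : ℝ}

theorem summable_rpow_of_le_mul_pow {s : ℝ} (hδ : 0 < δ) (hq : 1 < q) (hs : s < 0)
    (hr : ∀ n, δ * q ^ n ≤ r n) : Summable fun n => r n ^ s := by
  have hq_rpow : q ^ s < 1 := rpow_lt_one_of_one_lt_of_neg hq hs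
  have hr_nonneg (n : ℕ) : 0 ≤ r n := (by positivity : 0 ≤ δ * q ^ n).trans (hr n)
  refine Summable.of_nonneg_of_le (fun n => rpow_nonneg (hr_nonneg n) _) (fun n => ?_)
    ((summable_geometric_of_lt_one (by positivity) hq_rpow).mul_left (δ ^ s))
  calc r n ^ s ≤ (δ * q ^ n) ^ s := rpow_le_rpow_of_nonpos (by positivity) (hr n) hs.le
    _ = δ ^ s * (q ^ s) ^ n := by
      rw [mul_rpow hδ.le (by positivity), ← rpow_natCast_mul (by positivity), mul_comm (n : ℝ),
        rpow_mul_natCast (by positivity)]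

theorem summable_inv_of_le_mul_pow (hδ : 0 < δ) (hq : 1 < q) (hr : ∀ n, δ * q ^ n ≤ r n) :
    Summable fun n => (r n)⁻¹ := by
  simpa [rpow_neg_one] using summable_rpow_of_le_mul_pow hδ hq (s := -1) (by norm_num) hr

theorem summable_log_div_of_le_mul_pow (hδ : 0 < δ) (hq : 1 < q) (hr : ∀ n, δ * q ^ n ≤ r n)
    (h1 : ∀ n, 1 ≤ r n) : Summable fun n => log (r n) / r n := by
  refine Summable.of_nonneg_of_le (fun n => div_nonneg (log_nonneg (h1 n)) (by linarith [h1 n]))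
    (fun n => log_div_self_le_rpow_sub_one_div (by linarith [h1 n]) one_half_pos)
    ((summable_rpow_of_le_mul_pow hδ hq (by norm_num) hr).div_const _)

end GeometricGrowth

theorem discrete_gronwall_tsum {u b c : ℕ → ℝ} (hu : ∀ n, u (n + 1) ≤ (1 + c n) * u n + b n)
    (hc : ∀ n, 0 ≤ c n) (hb : ∀ n, 0 ≤ b n) (hsc : Summable c) (hsb : Summable b) (n : ℕ) :
    u n ≤ (max (u 0) 0 + ∑' k, b k) * exp (∑' k, c k) := by
  have hu_pos (n : ℕ) : max (u (n + 1)) 0 ≤ (1 + c n) * max (u n) 0 + b n := by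
    have hc1 : 0 ≤ 1 + c n := by linarith [hc n]
    refine max_le ((hu n).trans ?_) (add_nonneg (mul_nonneg hc1 (le_max_right _ _)) (hb n))
    gcongr
    exact le_max_left _ _
  calc u n ≤ max (u n) 0 := le_max_left _ _
    _ ≤ (max (u 0) 0 + ∑ k ∈ Ico 0 n, b k) * exp (∑ k ∈ Ico 0 n, c k) :=
      discrete_gronwall (u := fun n => max (u n) 0) (le_max_right _ _) (fun n _ => hu_pos n)
        (fun n _ => hc n) (fun n _ => hb n) (Nat.zero_le n)
    _ ≤ (max (u 0) 0 + ∑' k, b k) * exp (∑' k, c k) := by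
      have hb_le := hsb.sum_le_tsum (Ico 0 n) (fun k _ => hb k)
      have hc_le := hsc.sum_le_tsum (Ico 0 n) (fun k _ => hc k)
      have hb_tsum : 0 ≤ ∑' k, b k := tsum_nonneg hb
      gcongr

theorem stmt_13_general (N : ℕ) (m p₀ C : ℝ) (hm : 1 < m) (hp₀ : m + 1 < p₀)
    (hC : 1 ≤ C)
    (r : ℕ → ℝ) (hr : ∀ n : ℕ, r n = 2 ^ n * (p₀ - m - 1) + m + 1)
    (W : ℕ → ℝ) (hWpos : ∀ n : ℕ, 0 < W n) (hW0 : W 0 ≤ C)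
    (hWrec : ∀ n : ℕ, 1 ≤ n →
      W n ≤ C ^ (1 / r n) * r n ^ ((2 + 2 * (N : ℝ)) / r n)
              * W (n - 1) ^ ((r n + m - 1) / r n)) :
    ∃ C' : ℝ, 0 < C' ∧ ∀ n : ℕ, W n ≤ C' := by
  set ρ : ℕ → ℝ := fun n => r (n + 1)
  have hδ : 0 < p₀ - m - 1 := by linarith
  have hρ_growth (n : ℕ) : (p₀ - m - 1) * 2 ^ n ≤ ρ n := by
    have : (0 : ℝ) < 2 ^ n := by positivity
    simp only [ρ, hr, pow_succ]
    nlinarith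
  have hρ_one (n : ℕ) : 1 ≤ ρ n := by
    have : (0 : ℝ) < 2 ^ (n + 1) := by positivity
    simp only [ρ, hr]
    nlinarith
  have hρ_pos (n : ℕ) : 0 < ρ n := by linarith [hρ_one n]
  set c : ℕ → ℝ := fun n => (m - 1) / ρ n
  set b : ℕ → ℝ := fun n => (log C + (2 + 2 * N) * log (ρ n)) / ρ n
  have hc (n : ℕ) : 0 ≤ c n := div_nonneg (by linarith) (hρ_pos n).le
  have hb (n : ℕ) : 0 ≤ b n :=
    div_nonneg (by have := log_nonneg hC; have := log_nonneg (hρ_one n); positivity) (hρ_pos n).le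
  have hrec (n : ℕ) : log (W (n + 1)) ≤ (1 + c n) * log (W n) + b n := by
    have hlog_step := log_le_of_le_rpow_mul_rpow_mul_rpow (hWpos _) (by linarith) (hρ_pos n)
      (hWpos n) (hWrec (n + 1) (by omega))
    have hne : r (n + 1) ≠ 0 := (hρ_pos n).ne'
    convert hlog_step using 1
    simp only [c, b, ρ]
    field_simp
    ring
  have hsum_inv := summable_inv_of_le_mul_pow hδ one_lt_two hρ_growth
  have hsum_log := summable_log_div_of_le_mul_pow hδ one_lt_two hρ_growth hρ_one
  have hc_sum : Summable c := (hsum_inv.mul_left (m - 1)).congr fun n => (div_eq_mul_inv _ _).symm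
  have hb_sum : Summable b := ((hsum_inv.mul_left (log C)).add
    (hsum_log.mul_left (2 + 2 * (N : ℝ)))).congr fun n => by simp only [b]; ring
  have hW0_log : max (log (W 0)) 0 ≤ log C := max_le (log_le_log (hWpos 0) hW0) (log_nonneg hC)
  refine ⟨exp ((log C + ∑' k, b k) * exp (∑' k, c k)), exp_pos _, fun n => ?_⟩
  have hlog := discrete_gronwall_tsum (u := fun k => log (W k)) hrec hc hb hc_sum hb_sum n
  calc W n = exp (log (W n)) := (exp_log (hWpos n)).symm
    _ ≤ _ := exp_le_exp.mpr <| hlog.trans (by gcongr)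

/-- Closure of the Moser iteration: the recursive inequality
W_n ≤ C^{1/r_n} r_n^{(2+2N)/r_n} W_{n-1}^{(r_n+m-1)/r_n} with W₀ ≤ C implies
a uniform bound on (W_n). -/
theorem stmt_13 (N : ℕ) (hN : 1 ≤ N) (m p₀ C : ℝ) (hm : 1 < m) (hp₀ : m + 1 < p₀)
    (hC : 1 ≤ C)
    (r : ℕ → ℝ) (hr : ∀ n : ℕ, r n = 2 ^ n * (p₀ - m - 1) + m + 1)
    (W : ℕ → ℝ) (hWpos : ∀ n : ℕ, 0 < W n) (hW0 : W 0 ≤ C)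
    (hWrec : ∀ n : ℕ, 1 ≤ n →
      W n ≤ C ^ (1 / r n) * r n ^ ((2 + 2 * (N : ℝ)) / r n)
              * W (n - 1) ^ ((r n + m - 1) / r n)) :
    ∃ C' : ℝ, 0 < C' ∧ ∀ n : ℕ, W n ≤ C' :=
  stmt_13_general N m p₀ C hm hp₀ hC r hr W hWpos hW0 hWrec
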